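/- arXiv:2411.14926 — 8 statements merged into one kernel-verified Lean document; each statement's English description precedes it below -/
import Mathlib

section
/- If a nonnegative random variable X has density f_X whose hazard rate r_X(x) = f_X(x)/(1 - F_X(x)) satisfies r_X(x) ≤ 1/x for all x > 0, then the function x ↦ 1 - F_X(1/x) is subadditive on (0,∞), i.e. X is InvSub. -/
/-!
Write `G u = μ (Ioi u)` for the survival function. Where `G > 0`, the hazard bound reads
`f u ≤ G u / u`, so over a step `[a, b]` the function `u ↦ u * G u` drops by at most
`(b - a)^2 * G a / a`; cutting `[a, b]` into `n` equal steps bounds the total drop by `O(1/n)`,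
hence `u * G u` is nondecreasing. Positivity of `G` on `(0, ∞)` comes for free unless `G`
vanishes there identically: at the first zero `T > 0` of `G`, monotonicity on `(0, T]` would
force `G (T / 2) = 0`. Finally `v x = G (1 / x)` has `v x / x = (1 / x) * G (1 / x)`
nonincreasing, and such a `v` is subadditive on `(0, ∞)`.
-/

open MeasureTheory Set Filter Topology ProbabilityTheory

theorem monotoneOn_of_sub_le_mul_sq {φ : ℝ → ℝ} {s : Set ℝ} [s.OrdConnected] {C : ℝ}
    (h : ∀ a ∈ s, ∀ b ∈ s, a ≤ b → φ a - φ b ≤ C * (b - a) ^ 2) : MonotoneOn φ s := by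
  intro a ha b hb hab
  have hsplit (n : ℕ) : φ a - φ b ≤ C * (b - a) ^ 2 * (1 / ((n : ℝ) + 1)) := by
    set δ := (b - a) / ((n : ℝ) + 1)
    have hδ : 0 ≤ δ := div_nonneg (sub_nonneg.2 hab) (by positivity)
    set x : ℕ → ℝ := fun k => a + k * δ
    have hxn : x (n + 1) = b := by simp only [x, δ]; push_cast; field_simp; ring
    have hx {k : ℕ} (hk : k ≤ n + 1) : x k ∈ s := by
      refine Set.OrdConnected.out ‹_› ha hb ⟨?_, ?_⟩
      · dsimp only [x]; nlinarith [hδ]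
      · rw [← hxn]; simp only [x]; gcongr
    calc φ a - φ b = ∑ k ∈ Finset.range (n + 1), (φ (x k) - φ (x (k + 1))) := by
          rw [Finset.sum_range_sub', hxn]; simp [x]
      _ ≤ ∑ k ∈ Finset.range (n + 1), C * δ ^ 2 := by
          refine Finset.sum_le_sum fun k hk => ?_
          have hk := Finset.mem_range.1 hk
          have hstep : x (k + 1) - x k = δ := by simp only [x]; push_cast; ring
          simpa [hstep] using h (x k) (hx hk.le) (x (k + 1)) (hx hk) (by linarith)
      _ = C * (b - a) ^ 2 * (1 / ((n : ℝ) + 1)) := by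
          simp only [Finset.sum_const, Finset.card_range, nsmul_eq_mul, δ]; push_cast
          field_simp
  have hlim : Tendsto (fun n : ℕ => C * (b - a) ^ 2 * (1 / ((n : ℝ) + 1))) atTop (𝓝 0) := by
    simpa using tendsto_one_div_add_atTop_nhds_zero_nat.const_mul (C * (b - a) ^ 2)
  linarith [ge_of_tendsto' hlim hsplit]

theorem le_add_of_antitoneOn_div {v : ℝ → ℝ} (hv : AntitoneOn (fun x => v x / x) (Ioi 0))
    {x y : ℝ} (hx : 0 < x) (hy : 0 < y) : v (x + y) ≤ v x + v y := by
  have hxy : 0 < x + y := add_pos hx hy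
  have h₁ : v (x + y) / (x + y) ≤ v x / x := hv hx hxy (by linarith)
  have h₂ : v (x + y) / (x + y) ≤ v y / y := hv hy hxy (by linarith)
  calc v (x + y) = x * (v (x + y) / (x + y)) + y * (v (x + y) / (x + y)) := by
        field_simp
    _ ≤ x * (v x / x) + y * (v y / y) := by gcongr
    _ = v x + v y := by field_simp

section Density

variable {f : ℝ → ℝ} {μ : Measure ℝ}

theorem measureReal_Ioi_sub_le_of_le
    (hμ : μ = volume.withDensity (fun x => ENNReal.ofReal (f x))) [IsFiniteMeasure μ]
    {a b c : ℝ} (hab : a ≤ b) (hc : 0 ≤ c) (hfc : ∀ u ∈ Ioo a b, f u ≤ c) :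
    μ.real (Ioi a) - μ.real (Ioi b) ≤ c * (b - a) := by
  have hIoc : μ (Ioc a b) ≤ ENNReal.ofReal (c * (b - a)) :=
    calc μ (Ioc a b) = ∫⁻ u in Ioo a b, ENNReal.ofReal (f u) := by
          rw [hμ, withDensity_apply _ measurableSet_Ioc, Measure.restrict_congr_set Ioo_ae_eq_Ioc]
      _ ≤ ∫⁻ _ in Ioo a b, ENNReal.ofReal c :=
          setLIntegral_mono measurable_const fun u hu => ENNReal.ofReal_le_ofReal (hfc u hu)
      _ = ENNReal.ofReal (c * (b - a)) := by
          rw [setLIntegral_const, Real.volume_Ioo, ← ENNReal.ofReal_mul hc]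
  rw [← measureReal_sdiff (Ioi_subset_Ioi hab) measurableSet_Ioi, Ioi_sdiff_Ioi]
  exact ENNReal.toReal_le_of_le_ofReal (mul_nonneg hc (sub_nonneg.2 hab)) hIoc

theorem mul_measureReal_Ioi_sub_le
    (hμ : μ = volume.withDensity (fun x => ENNReal.ofReal (f x))) [IsFiniteMeasure μ]
    {a b : ℝ} (ha : 0 < a) (hab : a ≤ b)
    (hhaz : ∀ u ∈ Ioo a b, f u ≤ μ.real (Ioi u) / u) :
    a * μ.real (Ioi a) - b * μ.real (Ioi b) ≤ (b - a) ^ 2 * (μ.real (Ioi a) / a) := by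
  set G := fun u => μ.real (Ioi u)
  have hGa : 0 ≤ G a / a := by positivity
  have hdrop : G a - G b ≤ G a / a * (b - a) := by
    refine measureReal_Ioi_sub_le_of_le hμ hab hGa fun u hu => (hhaz u hu).trans ?_
    exact div_le_div₀ measureReal_nonneg (measureReal_mono (Ioi_subset_Ioi hu.1.le))
      ha hu.1.le
  calc a * G a - b * G b = a * (G a - G b) - (b - a) * G b := by ring
    _ ≤ (b - a) * G a - (b - a) * G b := by
        have := mul_le_mul_of_nonneg_left hdrop ha.le
        rw [show a * (G a / a * (b - a)) = (b - a) * G a by field_simp] at this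
        linarith
    _ = (b - a) * (G a - G b) := by ring
    _ ≤ (b - a) * (G a / a * (b - a)) := mul_le_mul_of_nonneg_left hdrop (sub_nonneg.2 hab)
    _ = (b - a) ^ 2 * (G a / a) := by ring

theorem monotoneOn_mul_measureReal_Ioi_Ioc
    (hμ : μ = volume.withDensity (fun x => ENNReal.ofReal (f x))) [IsFiniteMeasure μ]
    (hhaz : ∀ u, 0 < u → 0 < μ.real (Ioi u) → f u ≤ μ.real (Ioi u) / u) {T : ℝ}
    (hT : ∀ u ∈ Ioo 0 T, 0 < μ.real (Ioi u)) :
    MonotoneOn (fun u => u * μ.real (Ioi u)) (Ioc 0 T) := by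
  intro a ha b hb hab
  refine monotoneOn_of_sub_le_mul_sq (φ := fun u => u * μ.real (Ioi u)) (s := Icc a b)
    (C := μ.real (Ioi a) / a) ?_ ⟨le_rfl, hab⟩ ⟨hab, le_rfl⟩ hab
  intro x hx y hy hxy
  have hx0 : 0 < x := ha.1.trans_le hx.1
  have hhaz_xy (u : ℝ) (hu : u ∈ Ioo x y) : f u ≤ μ.real (Ioi u) / u :=
    hhaz u (hx0.trans hu.1) (hT u ⟨hx0.trans hu.1, hu.2.trans_le (hy.2.trans hb.2)⟩)
  calc x * μ.real (Ioi x) - y * μ.real (Ioi y) ≤ (y - x) ^ 2 * (μ.real (Ioi x) / x) :=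
        mul_measureReal_Ioi_sub_le hμ hx0 hxy hhaz_xy
    _ ≤ μ.real (Ioi a) / a * (y - x) ^ 2 := by
        rw [mul_comm]
        gcongr ?_ * _
        exact div_le_div₀ measureReal_nonneg (measureReal_mono (μ := μ) (Ioi_subset_Ioi hx.1))
          ha.1 hx.1

theorem measureReal_Ioi_eq_zero_of_eq_zero
    (hμ : μ = volume.withDensity (fun x => ENNReal.ofReal (f x))) [IsProbabilityMeasure μ]
    (hhaz : ∀ u, 0 < u → 0 < μ.real (Ioi u) → f u ≤ μ.real (Ioi u) / u) {a b : ℝ}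
    (ha : 0 < a) (hGa : μ.real (Ioi a) = 0) (hb : 0 < b) : μ.real (Ioi b) = 0 := by
  set G := fun u => μ.real (Ioi u)
  set Z := {u | 0 < u ∧ G u = 0}
  have hZ : Z.Nonempty := ⟨a, ha, hGa⟩
  have hZbdd : BddBelow Z := ⟨0, fun u hu => hu.1.le⟩
  set T := sInf Z
  have hzero (v : ℝ) (hv : T < v) : G v = 0 := by
    obtain ⟨z, hz, hzv⟩ := exists_lt_of_csInf_lt hZ hv
    exact le_antisymm (hz.2 ▸ measureReal_mono (Ioi_subset_Ioi hzv.le)) measureReal_nonneg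
  have hGT : G T = 0 := by
    have hG_cdf : G = fun u => 1 - cdf μ u := by
      ext u
      rw [cdf_eq_real, ← probReal_compl_eq_one_sub measurableSet_Iic, compl_Iic]
    have hcont : Tendsto G (𝓝[>] T) (𝓝 (G T)) := by
      rw [hG_cdf]
      exact (continuousWithinAt_const.sub ((cdf μ).right_continuous T)).mono Ioi_subset_Ici_self
    exact tendsto_nhds_unique hcont
      (tendsto_const_nhds.congr' (eventually_nhdsWithin_of_forall fun v hv => (hzero v hv).symm))
  refine hzero b (lt_of_not_ge fun hbT => ?_)
  have hT : 0 < T := hb.trans_le hbT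
  have hpos (u : ℝ) (hu : u ∈ Ioo 0 T) : 0 < G u :=
    measureReal_nonneg.lt_of_ne fun h => (csInf_le hZbdd ⟨hu.1, h.symm⟩).not_gt hu.2
  have hmono := monotoneOn_mul_measureReal_Ioi_Ioc hμ hhaz hpos
    (⟨half_pos hT, half_le_self hT.le⟩ : T / 2 ∈ Ioc 0 T) ⟨hT, le_rfl⟩ (half_le_self hT.le)
  have hGhalf : G (T / 2) = 0 := by
    change T / 2 * G (T / 2) ≤ T * G T at hmono
    rw [hGT, mul_zero] at hmono
    exact le_antisymm (nonpos_of_mul_nonpos_right hmono (half_pos hT)) measureReal_nonneg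
  linarith [csInf_le hZbdd ⟨half_pos hT, hGhalf⟩]

theorem monotoneOn_mul_measureReal_Ioi
    (hμ : μ = volume.withDensity (fun x => ENNReal.ofReal (f x))) [IsProbabilityMeasure μ]
    (hhaz : ∀ u, 0 < u → 0 < μ.real (Ioi u) → f u ≤ μ.real (Ioi u) / u) :
    MonotoneOn (fun u => u * μ.real (Ioi u)) (Ioi 0) := by
  by_cases hvanish : ∃ a, 0 < a ∧ μ.real (Ioi a) = 0
  · obtain ⟨a, ha, hGa⟩ := hvanish
    intro u hu v hv _
    simp [measureReal_Ioi_eq_zero_of_eq_zero hμ hhaz ha hGa hu,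
      measureReal_Ioi_eq_zero_of_eq_zero hμ hhaz ha hGa hv]
  · push Not at hvanish
    have hpos (u : ℝ) (hu : 0 < u) : 0 < μ.real (Ioi u) :=
      measureReal_nonneg.lt_of_ne (hvanish u hu).symm
    exact fun u hu v hv huv =>
      monotoneOn_mul_measureReal_Ioi_Ioc hμ hhaz (fun w hw => hpos w hw.1) ⟨hu, huv⟩ ⟨hv, le_rfl⟩
        huv

end Density

theorem stmt2_general (f : ℝ → ℝ)
    (μ : Measure ℝ) (hμ : μ = volume.withDensity (fun x => ENNReal.ofReal (f x)))
    [IsProbabilityMeasure μ]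
    (F : ℝ → ℝ) (hF : ∀ x, F x = (μ (Iic x)).toReal)
    (hhaz : ∀ x : ℝ, 0 < x → f x / (1 - F x) ≤ 1 / x) :
    ∀ x y : ℝ, 0 < x → 0 < y →
      1 - F (1 / (x + y)) ≤ (1 - F (1 / x)) + (1 - F (1 / y)) := by
  have hsurv (u : ℝ) : 1 - F u = μ.real (Ioi u) := by
    rw [hF, ← measureReal_def, ← compl_Iic, probReal_compl_eq_one_sub measurableSet_Iic]
  have hhaz_surv (u : ℝ) (hu : 0 < u) (hpos : 0 < μ.real (Ioi u)) :
      f u ≤ μ.real (Ioi u) / u := by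
    have := hhaz u hu
    rwa [hsurv, div_le_div_iff₀ hpos hu, one_mul, ← le_div_iff₀ hu] at this
  have hmono := monotoneOn_mul_measureReal_Ioi hμ hhaz_surv
  intro x y hx hy
  simp only [hsurv]
  refine le_add_of_antitoneOn_div (v := fun x => μ.real (Ioi (1 / x))) ?_ hx hy
  intro s hs t ht hst
  simpa [div_eq_inv_mul] using
    hmono (mem_Ioi.2 (inv_pos.2 ht)) (mem_Ioi.2 (inv_pos.2 hs)) (inv_anti₀ hs hst)

/-- If a nonnegative random variable has density `f` whose hazard rate
`f x / (1 - F x)` is at most `1/x` for all `x > 0`, then `x ↦ 1 - F (1/x)` is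
subadditive on `(0,∞)`, i.e. `X` is InvSub. -/
theorem stmt2 (f : ℝ → ℝ) (hf : ∀ x, 0 ≤ f x) (hf0 : ∀ x ≤ (0 : ℝ), f x = 0)
    (μ : Measure ℝ) (hμ : μ = volume.withDensity (fun x => ENNReal.ofReal (f x)))
    [IsProbabilityMeasure μ]
    (F : ℝ → ℝ) (hF : ∀ x, F x = (μ (Iic x)).toReal)
    (hhaz : ∀ x : ℝ, 0 < x → f x / (1 - F x) ≤ 1 / x) :
    ∀ x y : ℝ, 0 < x → 0 < y →
      1 - F (1 / (x + y)) ≤ (1 - F (1 / x)) + (1 - F (1 / y)) :=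
  stmt2_general f μ hμ F hF hhaz
end

section
/- If X is InvSub (i.e., x ↦ 1 - F_X(1/x) is subadditive on (0,∞)) and h: [0,∞) → [0,∞) is a continuous increasing star-shaped function (h(0)=0 and x ↦ h(x)/x increasing), then h(X) is InvSub. -/
open MeasureTheory Set

/-- If `X` is InvSub (`x ↦ 1 - F_X (1/x)` subadditive on `(0,∞)`) and
`h : [0,∞) → [0,∞)` is continuous, increasing and star-shaped (`h 0 = 0`, `h x / x`
increasing), then `h ∘ X` is InvSub. -/
theorem stmt6 {Ω : Type*} [MeasurableSpace Ω] (μ : Measure Ω) [IsProbabilityMeasure μ]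
    (X : Ω → ℝ) (hX : Measurable X) (hXnn : ∀ ω, 0 ≤ X ω)
    (F : ℝ → ℝ) (hF : ∀ x, F x = (μ {ω | X ω ≤ x}).toReal) (hF0 : F 0 = 0)
    (hsub : ∀ x y : ℝ, 0 < x → 0 < y →
      1 - F (1 / (x + y)) ≤ (1 - F (1 / x)) + (1 - F (1 / y)))
    (h : ℝ → ℝ) (hcont : ContinuousOn h (Ici 0)) (hmono : MonotoneOn h (Ici 0))
    (h0 : h 0 = 0) (hnn : ∀ x, 0 ≤ x → 0 ≤ h x)
    (hstar : ∀ x y : ℝ, 0 < x → x ≤ y → h x / x ≤ h y / y)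
    (G : ℝ → ℝ) (hG : ∀ x, G x = (μ {ω | h (X ω) ≤ x}).toReal) :
    ∀ x y : ℝ, 0 < x → 0 < y →
      1 - G (1 / (x + y)) ≤ (1 - G (1 / x)) + (1 - G (1 / y)) := by
  intro x y hx hy
  -- measurability of the level sets of h ∘ X
  have hGset : ∀ t : ℝ, MeasurableSet {ω | h (X ω) ≤ t} := by
    intro t
    have heq : {ω | h (X ω) ≤ t} = X ⁻¹' ({v | h v ≤ t} ∩ Ici 0) := by
      ext ω
      simp only [mem_setOf_eq, mem_preimage, mem_inter_iff, mem_Ici]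
      exact ⟨fun hw => ⟨hw, hXnn ω⟩, fun hw => hw.1⟩
    rw [heq]
    apply hX
    have : ({v | h v ≤ t} ∩ Ici 0).OrdConnected := by
      constructor
      intro p hp q hq z hz
      refine ⟨?_, le_trans hp.2 hz.1⟩
      exact le_trans (hmono (le_trans hp.2 hz.1) hq.2 hz.2) hq.1
    exact this.measurableSet
  have hFset : ∀ t : ℝ, MeasurableSet {ω | X ω ≤ t} := fun t =>
    hX measurableSet_Iic
  -- complement/tail formula
  have tail : ∀ A : Set Ω, MeasurableSet A → 1 - (μ A).toReal = (μ Aᶜ).toReal := by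
    intro A hA
    rw [measure_compl hA (measure_ne_top μ A), measure_univ,
      ENNReal.toReal_sub_of_le prob_le_one ENNReal.one_ne_top, ENNReal.toReal_one]
  have tailG : ∀ t : ℝ, 1 - G t = (μ {ω | t < h (X ω)}).toReal := by
    intro t
    rw [hG, tail _ (hGset t)]
    have : {ω | h (X ω) ≤ t}ᶜ = {ω | t < h (X ω)} := by
      ext ω; simp [not_le]
    rw [this]
  have tailF : ∀ t : ℝ, 1 - F t = (μ {ω | t < X ω}).toReal := by
    intro t
    rw [hF, tail _ (hFset t)]
    have : {ω | X ω ≤ t}ᶜ = {ω | t < X ω} := by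
      ext ω; simp [not_le]
    rw [this]
  have mono_tail : ∀ A B : Set Ω, A ⊆ B → (μ A).toReal ≤ (μ B).toReal := fun A B hAB =>
    ENNReal.toReal_mono (measure_ne_top μ B) (measure_mono hAB)
  -- trivial case: h is identically 0 on [0,∞)
  by_cases hz : ∀ v : ℝ, 0 ≤ v → h v ≤ 0
  · have hGone : ∀ t : ℝ, 0 < t → G t = 1 := by
      intro t ht
      rw [hG]
      have : {ω | h (X ω) ≤ t} = univ := by
        ext ω
        simp only [mem_setOf_eq, mem_univ, iff_true]
        exact le_trans (hz _ (hXnn ω)) ht.le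
      rw [this, measure_univ, ENNReal.toReal_one]
    rw [hGone (1 / (x + y)) (by positivity), hGone (1 / x) (by positivity),
      hGone (1 / y) (by positivity)]
    norm_num
  -- main case: h is positive somewhere, hence unbounded
  push_neg at hz
  obtain ⟨v₀, hv₀nn, hv₀pos⟩ := hz
  have hv₀ : 0 < v₀ := by
    rcases hv₀nn.lt_or_eq with h' | h'
    · exact h'
    · rw [← h', h0] at hv₀pos; linarith
  -- h is unbounded: every level is exceeded
  have hS : ∀ t : ℝ, ∃ v : ℝ, 0 ≤ v ∧ t < h v := by
    intro t
    set l : ℝ := max 1 ((t + 1) / h v₀) with hl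
    have hl1 : 1 ≤ l := le_max_left _ _
    have hlt : (t + 1) / h v₀ ≤ l := le_max_right _ _
    refine ⟨l * v₀, by positivity, ?_⟩
    have hle : v₀ ≤ l * v₀ := by nlinarith
    have := hstar v₀ (l * v₀) hv₀ hle
    rw [div_le_div_iff₀ hv₀ (by positivity)] at this
    -- this : h v₀ * (l * v₀) ≤ h (l * v₀) * v₀
    have h1 : l * h v₀ ≤ h (l * v₀) := by nlinarith
    have h2 : t + 1 ≤ l * h v₀ := by
      rw [div_le_iff₀ hv₀pos] at hlt; linarith
    linarith
  -- generalized inverse of h at level 1/t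
  have hInf : ∀ t : ℝ, 0 < t → ∃ c : ℝ, 0 < c ∧
      (∀ v, 0 ≤ v → v < c → h v ≤ 1 / t) ∧ (∀ u, c < u → 1 / t < h u) := by
    intro t ht
    set S : Set ℝ := {v : ℝ | 0 ≤ v ∧ 1 / t < h v} with hSdef
    obtain ⟨w, hwnn, hw⟩ := hS (1 / t)
    have hSne : S.Nonempty := ⟨w, hwnn, hw⟩
    have hSbdd : BddBelow S := ⟨0, fun v hv => hv.1⟩
    have hSnn : 0 ≤ sInf S := le_csInf hSne fun v hv => hv.1
    refine ⟨sInf S, ?_, ?_, ?_⟩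
    · -- positivity via continuity at 0
      have hc0 : ContinuousWithinAt h (Ici 0) 0 := hcont 0 (by simp)
      have hev : ∀ᶠ v in nhdsWithin 0 (Ici 0), h v < 1 / t := by
        have : h 0 < 1 / t := by rw [h0]; positivity
        exact hc0.eventually_lt continuousWithinAt_const this
      rw [Filter.eventually_iff, Metric.mem_nhdsWithin_iff] at hev
      obtain ⟨ε, hε, hball⟩ := hev
      have : ε ≤ sInf S := by
        apply le_csInf hSne
        intro v hv
        by_contra hvε
        push_neg at hvε
        have : h v < 1 / t := by
          apply hball
          refine ⟨Metric.mem_ball.mpr ?_, hv.1⟩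
          rw [Real.dist_eq, sub_zero, abs_of_nonneg hv.1]
          exact hvε
        exact absurd hv.2 (not_lt.mpr this.le)
      linarith
    · intro v hvnn hvlt
      by_contra hc
      push_neg at hc
      exact absurd (csInf_le hSbdd ⟨hvnn, hc⟩) (not_le.mpr hvlt)
    · intro u hu
      obtain ⟨v, hvS, hvu⟩ := exists_lt_of_csInf_lt hSne hu
      exact lt_of_lt_of_le hvS.2 (hmono hvS.1 (le_trans hSnn hu.le) hvu.le)
  obtain ⟨a, ha_pos, ha_below, ha_above⟩ := hInf x hx
  obtain ⟨b, hb_pos, hb_below, hb_above⟩ := hInf y hy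
  set c : ℝ := a * b / (a + b) with hc
  have hc_pos : 0 < c := by positivity
  -- generic step: if u*(p+q)/p is below the inverse at level 1/p then h u ≤ 1/(p+q)
  have main : ∀ p q cp : ℝ, 0 < p → 0 < q → 0 < cp →
      (∀ v, 0 ≤ v → v < cp → h v ≤ 1 / p) →
      ∀ u : ℝ, 0 < u → u * (p + q) / p < cp → h u ≤ 1 / (p + q) := by
    intro p q cp hp hq hcp hbelow u hu hlt
    set v : ℝ := u * (p + q) / p with hv
    have hv_pos : 0 < v := by positivity
    have huv : u ≤ v := by
      rw [hv, le_div_iff₀ hp]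
      nlinarith
    have h1 := hstar u v hu huv
    rw [div_le_div_iff₀ hu hv_pos] at h1
    -- h1 : h u * v ≤ h v * u
    have h2 : h v ≤ 1 / p := hbelow v hv_pos.le hlt
    have h3 : h v * u ≤ u / p := by
      rw [div_eq_mul_one_div u p]
      nlinarith
    -- h u * (u * (p+q) / p) ≤ u / p, so h u * (p+q) ≤ 1
    have hvp : v * p = u * (p + q) := by rw [hv]; field_simp
    have h4 : h u * (u * (p + q)) ≤ u := by
      calc h u * (u * (p + q)) = h u * v * p := by rw [← hvp]; ring
        _ ≤ h v * u * p := by nlinarith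
        _ = h v * (u * p) := by ring
        _ ≤ (1 / p) * (u * p) := by nlinarith [mul_pos hu hp]
        _ = u := by field_simp
    rw [le_div_iff₀ (by positivity)]
    nlinarith
  -- key claim (non-strict): h u > 1/(x+y) forces u ≥ a*b/(a+b)
  have key : ∀ u : ℝ, 0 < u → 1 / (x + y) < h u → c ≤ u := by
    intro u hu hhu
    by_contra hcu
    push_neg at hcu
    have hcases : u * (x + y) / x < a ∨ u * (x + y) / y < b := by
      by_contra hcc
      push_neg at hcc
      obtain ⟨h1, h2⟩ := hcc
      rw [le_div_iff₀ hx] at h1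
      rw [le_div_iff₀ hy] at h2
      rw [hc, lt_div_iff₀ (by positivity)] at hcu
      nlinarith
    rcases hcases with hcase | hcase
    · have := main x y a hx hy ha_pos ha_below u hu hcase
      linarith
    · have := main y x b hy hx hb_pos hb_below u hu
        (by rw [add_comm y x]; exact hcase)
      rw [add_comm y x] at this
      linarith
  -- strict version via continuity
  have keys : ∀ u : ℝ, 0 ≤ u → 1 / (x + y) < h u → c < u := by
    intro u hunn hhu
    have hu : 0 < u := by
      rcases hunn.lt_or_eq with h' | h'
      · exact h'
      · rw [← h', h0] at hhu
        exfalso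
        have : (0:ℝ) < 1 / (x + y) := by positivity
        linarith
    have hcu : ContinuousWithinAt h (Ici 0) u := hcont u hunn
    have hev : ∀ᶠ v in nhdsWithin u (Ici 0), 1 / (x + y) < h v :=
      continuousWithinAt_const.eventually_lt hcu hhu
    rw [Filter.eventually_iff, Metric.mem_nhdsWithin_iff] at hev
    obtain ⟨ε, hε, hball⟩ := hev
    set u' : ℝ := max (u - ε / 2) (u / 2) with hu'
    have hu'pos : 0 < u' := lt_of_lt_of_le (by linarith) (le_max_right _ _)
    have hu'lt : u' < u := max_lt (by linarith) (by linarith)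
    have hu'dist : dist u' u < ε := by
      rw [Real.dist_eq, abs_of_nonpos (by linarith)]
      have : u - ε / 2 ≤ u' := le_max_left _ _
      linarith
    have : 1 / (x + y) < h u' := hball ⟨Metric.mem_ball.mpr hu'dist, hu'pos.le⟩
    exact lt_of_le_of_lt (key u' hu'pos this) hu'lt
  -- chain of inequalities
  have step1 : 1 - G (1 / (x + y)) ≤ 1 - F c := by
    rw [tailG, tailF]
    apply mono_tail
    intro ω hω
    exact keys (X ω) (hXnn ω) hω
  have step2 : 1 - F c ≤ (1 - F a) + (1 - F b) := by
    have := hsub (1 / a) (1 / b) (by positivity) (by positivity)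
    have e1 : 1 / (1 / a + 1 / b) = c := by
      rw [hc]; field_simp; ring
    rw [e1, one_div_one_div, one_div_one_div] at this
    exact this
  have step3 : 1 - F a ≤ 1 - G (1 / x) := by
    rw [tailF, tailG]
    apply mono_tail
    intro ω hω
    exact ha_above (X ω) hω
  have step4 : 1 - F b ≤ 1 - G (1 / y) := by
    rw [tailF, tailG]
    apply mono_tail
    intro ω hω
    exact hb_above (X ω) hω
  linarith
end

section
/- If h: [0,∞) → [0,∞) is increasing, continuous, h(0) = 0, and x ↦ h(x)/x is increasing (h is star-shaped), then its generalized inverse h^{-1}(u) = sup{x : h(x) ≤ u} satisfies h^{-1}(u)/u decreasing, i.e., h^{-1} is anti-star-shaped; in particular h^{-1}(x/θ) ≤ h^{-1}(x)/θ for all x ≥ 0 and θ ∈ (0,1). -/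
open Set

/-- If `h : [0,∞) → [0,∞)` is increasing, continuous, `h 0 = 0` and
star-shaped (`h x / x` increasing), then its generalized inverse
`h⁻¹ u = sup {x | 0 ≤ x ∧ h x ≤ u}` is anti-star-shaped (`h⁻¹ u / u` decreasing);
in particular `h⁻¹ (x/θ) ≤ h⁻¹ x / θ` for all `x ≥ 0`, `θ ∈ (0,1)`. -/
theorem stmt7 (h : ℝ → ℝ) (hcont : ContinuousOn h (Ici 0)) (hmono : MonotoneOn h (Ici 0))
    (h0 : h 0 = 0) (hnn : ∀ x, 0 ≤ x → 0 ≤ h x)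
    (hstar : ∀ x y : ℝ, 0 < x → x ≤ y → h x / x ≤ h y / y)
    (hinv : ℝ → ℝ) (hinv_def : ∀ u, hinv u = sSup {x : ℝ | 0 ≤ x ∧ h x ≤ u}) :
    (∀ u v : ℝ, 0 < u → u ≤ v → hinv v / v ≤ hinv u / u) ∧
    (∀ x θ : ℝ, 0 ≤ x → θ ∈ Ioo (0 : ℝ) 1 → hinv (x / θ) ≤ hinv x / θ) := by
  by_cases hz : ∀ x, 0 ≤ x → h x ≤ 0
  · -- degenerate case: h ≡ 0 on [0,∞), hence hinv u = 0 for u ≥ 0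
    have hval : ∀ u, 0 ≤ u → hinv u = 0 := by
      intro u hu
      rw [hinv_def]
      have hset : {x : ℝ | 0 ≤ x ∧ h x ≤ u} = Ici 0 := by
        ext x
        simp only [mem_setOf_eq, mem_Ici]
        exact ⟨fun hx => hx.1, fun hx => ⟨hx, (hz x hx).trans hu⟩⟩
      rw [hset]
      exact Real.sSup_of_not_bddAbove (not_bddAbove_Ici (0:ℝ))
    constructor
    · intro u v hu huv
      rw [hval u hu.le, hval v (hu.trans_le huv).le]
      simp
    · intro x θ hx hθ
      rw [hval x hx, hval (x/θ) (div_nonneg hx hθ.1.le)]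
      simp
  · push_neg at hz
    obtain ⟨x0, hx0nn, hx0pos'⟩ := hz
    have hx0pos : 0 < h x0 := hx0pos'
    have hx0 : 0 < x0 := by
      rcases eq_or_lt_of_le hx0nn with he | hlt
      · rw [← he, h0] at hx0pos; exact absurd hx0pos (lt_irrefl 0)
      · exact hlt
    have hbdd : ∀ u : ℝ, BddAbove {x : ℝ | 0 ≤ x ∧ h x ≤ u} := by
      intro u
      set c := x0 * max 1 ((u+1)/(h x0)) with hc
      have hc1 : x0 ≤ c := le_mul_of_one_le_right hx0.le (le_max_left _ _)
      have hcpos : 0 < c := lt_of_lt_of_le hx0 hc1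
      have hc2 : x0 * ((u+1)/(h x0)) ≤ c :=
        mul_le_mul_of_nonneg_left (le_max_right _ _) hx0.le
      have hhc : u < h c := by
        have hstar' := hstar x0 c hx0 hc1
        have h1 : h x0 / x0 * c ≤ h c := (le_div_iff₀ hcpos).mp hstar'
        have h2 : h x0 / x0 * (x0 * ((u+1)/(h x0))) ≤ h x0 / x0 * c :=
          mul_le_mul_of_nonneg_left hc2 (div_nonneg hx0pos.le hx0.le)
        have h3 : h x0 / x0 * (x0 * ((u+1)/(h x0))) = u + 1 := by
          field_simp
        linarith
      refine ⟨c, fun x hx => ?_⟩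
      by_contra hlt
      push_neg at hlt
      have := hmono (mem_Ici.mpr hcpos.le) (mem_Ici.mpr hx.1) hlt.le
      linarith [hx.2]
    have hinv_nonneg : ∀ u, 0 ≤ u → 0 ≤ hinv u := by
      intro u hu
      rw [hinv_def]
      exact le_csSup (hbdd u) ⟨le_refl 0, by rw [h0]; exact hu⟩
    have key : ∀ u v : ℝ, 0 < u → u ≤ v → (u/v) * hinv v ≤ hinv u := by
      intro u v hu huv
      have hv : 0 < v := hu.trans_le huv
      have ht : 0 < u / v := div_pos hu hv
      rw [hinv_def, hinv_def]
      have hne : ({x : ℝ | 0 ≤ x ∧ h x ≤ v}).Nonempty :=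
        ⟨0, le_refl 0, by rw [h0]; exact hv.le⟩
      have hsub : ∀ x ∈ {x : ℝ | 0 ≤ x ∧ h x ≤ v},
          (u/v) * x ∈ {x : ℝ | 0 ≤ x ∧ h x ≤ u} := by
        intro x hx
        refine ⟨mul_nonneg ht.le hx.1, ?_⟩
        rcases eq_or_lt_of_le hx.1 with he | hpos
        · rw [← he, mul_zero, h0]; exact hu.le
        · have htx : 0 < (u/v) * x := mul_pos ht hpos
          have htle : u / v ≤ 1 := div_le_one_of_le₀ huv hv.le
          have hle : (u/v) * x ≤ x := by nlinarith
          have hs := hstar _ x htx hle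
          have h1 : h ((u/v)*x) ≤ h x / x * ((u/v)*x) := (div_le_iff₀ htx).mp hs
          have h2 : h x / x * ((u/v)*x) = (u/v) * h x := by
            field_simp
          have h3 : (u/v) * h x ≤ (u/v) * v := mul_le_mul_of_nonneg_left hx.2 ht.le
          have h4 : (u/v) * v = u := div_mul_cancel₀ u hv.ne'
          linarith
      have h1 : sSup {x : ℝ | 0 ≤ x ∧ h x ≤ v} ≤
          sSup {x : ℝ | 0 ≤ x ∧ h x ≤ u} / (u/v) := by
        apply csSup_le hne
        intro x hx
        rw [le_div_iff₀ ht, mul_comm]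
        exact le_csSup (hbdd u) (hsub x hx)
      calc (u/v) * sSup {x : ℝ | 0 ≤ x ∧ h x ≤ v}
          ≤ (u/v) * (sSup {x : ℝ | 0 ≤ x ∧ h x ≤ u} / (u/v)) :=
            mul_le_mul_of_nonneg_left h1 ht.le
        _ = sSup {x : ℝ | 0 ≤ x ∧ h x ≤ u} := mul_div_cancel₀ _ ht.ne'
    constructor
    · intro u v hu huv
      have hv : 0 < v := hu.trans_le huv
      have hk := key u v hu huv
      have h2 : u * hinv v = u/v * hinv v * v := by field_simp
      have h3 : u/v * hinv v * v ≤ hinv u * v := mul_le_mul_of_nonneg_right hk hv.le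
      rw [div_le_div_iff₀ hv hu]
      linarith
    · intro x θ hx hθ
      obtain ⟨hθ0, hθ1⟩ := hθ
      rcases eq_or_lt_of_le hx with he | hxpos
      · rw [← he, zero_div]
        have hn := hinv_nonneg 0 le_rfl
        rw [le_div_iff₀ hθ0]
        nlinarith
      · have hv : x ≤ x/θ := by
          rw [le_div_iff₀ hθ0]; nlinarith
        have hk := key x (x/θ) hxpos hv
        have ht : x / (x/θ) = θ := by
          field_simp
        rw [ht] at hk
        rw [le_div_iff₀ hθ0]
        linarith
end

section
/- Let X₁, X₂ be i.i.d. nonnegative random variables with common distribution function F satisfying F(x/θ) + F(x/(1-θ)) ≤ F(x) + 1 for all x ≥ 0 and θ ∈ (0,1). Then for any θ ∈ (0,1), X₁ is stochastically dominated by θX₁ + (1-θ)X₂, i.e. P(θX₁ + (1-θ)X₂ > x) ≥ P(X₁ > x) for all x. -/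
open MeasureTheory ProbabilityTheory Set

/-!
If `θ X₁ + (1 - θ) X₂ ≤ x` with `x ≥ 0`, then either `X₁ ≤ x` and `X₂ ≤ x / (1 - θ)`, or
`x < X₁ ≤ x / θ` and `X₂ ≤ x`. By independence this event has probability at most
`F x * F (x / (1 - θ)) + (F (x / θ) - F x) * F x = F x * (F (x / θ) + F (x / (1 - θ)) - F x)`,
which the InvSub condition bounds by `F x`. So `P(θ X₁ + (1 - θ) X₂ ≤ x) ≤ P(X₁ ≤ x)`.
-/

lemma le_and_le_div_or_mem_Ioc_of_convex_comb_le {θ u v x : ℝ} (hθ : θ ∈ Ioo 0 1)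
    (hu : 0 ≤ u) (hv : 0 ≤ v) (h : θ * u + (1 - θ) * v ≤ x) :
    (u ≤ x ∧ v ≤ x / (1 - θ)) ∨ (u ∈ Ioc x (x / θ) ∧ v ≤ x) := by
  obtain ⟨hθ0, hθ1⟩ := hθ
  have hu' : u ≤ x / θ := by rw [le_div_iff₀ hθ0]; nlinarith
  have hv' : v ≤ x / (1 - θ) := by rw [le_div_iff₀ (by linarith)]; nlinarith
  rcases le_or_gt u x with hux | hxu
  · exact .inl ⟨hux, hv'⟩
  · exact .inr ⟨⟨hxu, hu'⟩, by nlinarith⟩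

section

variable {Ω : Type*} [MeasurableSpace Ω] {μ : Measure Ω} {X Y : Ω → ℝ}

lemma ProbabilityTheory.IndepFun.measureReal_inter_preimage_eq_mul (hXY : IndepFun X Y μ)
    {s t : Set ℝ} (hs : MeasurableSet s) (ht : MeasurableSet t) :
    μ.real (X ⁻¹' s ∩ Y ⁻¹' t) = μ.real (X ⁻¹' s) * μ.real (Y ⁻¹' t) := by
  simp only [measureReal_def, hXY.measure_inter_preimage_eq_mul s t hs ht, ENNReal.toReal_mul]

lemma measureReal_preimage_Ioc [IsFiniteMeasure μ] (hX : Measurable X) {x a : ℝ}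
    (hxa : x ≤ a) :
    μ.real (X ⁻¹' Ioc x a) = μ.real (X ⁻¹' Iic a) - μ.real (X ⁻¹' Iic x) := by
  rw [← Iic_sdiff_Iic, preimage_sdiff,
    measureReal_sdiff (preimage_mono (Iic_subset_Iic.mpr hxa)) (hX measurableSet_Iic)]

lemma measureReal_convex_comb_le [IsFiniteMeasure μ] (hX : Measurable X)
    (hX0 : ∀ ω, 0 ≤ X ω) (hY0 : ∀ ω, 0 ≤ Y ω) (hXY : IndepFun X Y μ)
    {θ x : ℝ} (hθ : θ ∈ Ioo 0 1) (hx : 0 ≤ x) :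
    μ.real {ω | θ * X ω + (1 - θ) * Y ω ≤ x} ≤
      μ.real (X ⁻¹' Iic x) * μ.real (Y ⁻¹' Iic (x / (1 - θ))) +
        (μ.real (X ⁻¹' Iic (x / θ)) - μ.real (X ⁻¹' Iic x)) * μ.real (Y ⁻¹' Iic x) := by
  have hsplit : {ω | θ * X ω + (1 - θ) * Y ω ≤ x} ⊆
      (X ⁻¹' Iic x ∩ Y ⁻¹' Iic (x / (1 - θ))) ∪ (X ⁻¹' Ioc x (x / θ) ∩ Y ⁻¹' Iic x) :=
    fun ω h => le_and_le_div_or_mem_Ioc_of_convex_comb_le hθ (hX0 ω) (hY0 ω) h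
  have hxθ : x ≤ x / θ := le_div_self hx hθ.1 hθ.2.le
  calc _ ≤ _ := measureReal_mono hsplit
    _ ≤ _ := measureReal_union_le _ _
    _ = _ := by
      rw [hXY.measureReal_inter_preimage_eq_mul measurableSet_Iic measurableSet_Iic,
        hXY.measureReal_inter_preimage_eq_mul measurableSet_Ioc measurableSet_Iic,
        measureReal_preimage_Ioc hX hxθ]

lemma measure_preimage_Ioi_le_of_measureReal_preimage_Iic_le [IsProbabilityMeasure μ]
    (hX : Measurable X) (hY : Measurable Y) {x : ℝ}
    (h : μ.real (Y ⁻¹' Iic x) ≤ μ.real (X ⁻¹' Iic x)) :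
    μ (X ⁻¹' Ioi x) ≤ μ (Y ⁻¹' Ioi x) := by
  have hcompl {Z : Ω → ℝ} (hZ : Measurable Z) :
      μ.real (Z ⁻¹' Ioi x) = 1 - μ.real (Z ⁻¹' Iic x) := by
    rw [← probReal_compl_eq_one_sub (hZ measurableSet_Iic), ← preimage_compl, compl_Iic]
  rw [← ENNReal.toReal_le_toReal (measure_ne_top μ _) (measure_ne_top μ _), ← measureReal_def,
    ← measureReal_def, hcompl hX, hcompl hY]
  linarith

end

/-- If `X₁, X₂` are i.i.d. nonnegative random variables whose common
distribution function `F` satisfies `F (x/θ) + F (x/(1-θ)) ≤ F x + 1` for all `x ≥ 0`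
and `θ ∈ (0,1)`, then `X₁ ≤_st θ X₁ + (1-θ) X₂` for any `θ ∈ (0,1)`. -/
theorem stmt8 {Ω : Type*} [MeasurableSpace Ω] (μ : Measure Ω) [IsProbabilityMeasure μ]
    (X₁ X₂ : Ω → ℝ) (hX₁ : Measurable X₁) (hX₂ : Measurable X₂)
    (hnn₁ : ∀ ω, 0 ≤ X₁ ω) (hnn₂ : ∀ ω, 0 ≤ X₂ ω)
    (hindep : IndepFun X₁ X₂ μ)
    (hid : Measure.map X₁ μ = Measure.map X₂ μ)
    (F : ℝ → ℝ) (hF : ∀ x, F x = (μ {ω | X₁ ω ≤ x}).toReal)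
    (hsub : ∀ x θ : ℝ, 0 ≤ x → θ ∈ Ioo (0 : ℝ) 1 →
      F (x / θ) + F (x / (1 - θ)) ≤ F x + 1)
    (θ : ℝ) (hθ : θ ∈ Ioo (0 : ℝ) 1) :
    ∀ x : ℝ, μ {ω | x < X₁ ω} ≤ μ {ω | x < θ * X₁ ω + (1 - θ) * X₂ ω} := by
  intro x
  have hF₁ (t : ℝ) : μ.real (X₁ ⁻¹' Iic t) = F t := (hF t).symm
  have hF₂ (t : ℝ) : μ.real (X₂ ⁻¹' Iic t) = F t := by
    rw [← hF₁, measureReal_def, measureReal_def,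
      (IdentDistrib.mk hX₁.aemeasurable hX₂.aemeasurable hid).measure_mem_eq measurableSet_Iic]
  have hF₀ : 0 ≤ F x := hF₁ x ▸ measureReal_nonneg
  refine measure_preimage_Ioi_le_of_measureReal_preimage_Iic_le hX₁ (by fun_prop) ?_
  rw [hF₁]
  rcases lt_or_ge x 0 with hx | hx
  · have hempty : (fun ω => θ * X₁ ω + (1 - θ) * X₂ ω) ⁻¹' Iic x = ∅ :=
      eq_empty_of_forall_notMem fun ω hω => hω.not_gt <| hx.trans_le <|
        add_nonneg (mul_nonneg hθ.1.le (hnn₁ ω)) (mul_nonneg (sub_nonneg.2 hθ.2.le) (hnn₂ ω))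
    rw [hempty, measureReal_empty]
    exact hF₀
  · have hbound := measureReal_convex_comb_le hX₁ hnn₁ hnn₂ hindep hθ hx
    simp only [hF₁, hF₂] at hbound
    exact hbound.trans (by nlinarith [hsub x θ hx hθ])
end

section
/- Let X, X₁, ..., Xₙ be i.i.d. nonnegative random variables whose common distribution function F satisfies F(x/θ) + F(x/(1-θ)) ≤ F(x) + 1 for all x ≥ 0 and θ ∈ (0,1) (i.e., X is InvSub). Then for any weights θ₁,...,θₙ ≥ 0 with θ₁ + ⋯ + θₙ = 1, X ≤_st θ₁X₁ + ⋯ + θₙXₙ. -/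
open MeasureTheory ProbabilityTheory Set Finset

lemma key9 {Ω : Type*} [MeasurableSpace Ω] (μ : Measure Ω) [IsProbabilityMeasure μ]
    (X Z : Ω → ℝ) (hXm : Measurable X) (hZm : Measurable Z)
    (hXnn : ∀ ω, 0 ≤ X ω) (hZnn : ∀ ω, 0 ≤ Z ω)
    (hind : IndepFun X Z μ) (θ x : ℝ) (hθ0 : 0 < θ) (hθ1 : θ < 1) (hx : 0 ≤ x)
    (hG : ∀ t, μ {ω | Z ω ≤ t} ≤ μ {ω | X ω ≤ t})
    (hsub : (μ {ω | X ω ≤ x / θ}).toReal + (μ {ω | X ω ≤ x / (1 - θ)}).toReal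
      ≤ (μ {ω | X ω ≤ x}).toReal + 1) :
    μ {ω | θ * X ω + (1 - θ) * Z ω ≤ x} ≤ μ {ω | X ω ≤ x} := by
  have h1θ : (0:ℝ) < 1 - θ := by linarith
  -- basic divisions
  have hxθ : x ≤ x / θ := by
    rw [le_div_iff₀ hθ0]; nlinarith
  have hxθ' : x ≤ x / (1 - θ) := by
    rw [le_div_iff₀ h1θ]; nlinarith
  set A : Set Ω := {ω | X ω ≤ x} ∩ {ω | Z ω ≤ x / (1 - θ)} with hA
  set B : Set Ω := {ω | X ω ≤ x / θ} ∩ {ω | Z ω ≤ x} with hB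
  have hmX : ∀ t, MeasurableSet {ω | X ω ≤ t} := fun t => hXm measurableSet_Iic
  have hmZ : ∀ t, MeasurableSet {ω | Z ω ≤ t} := fun t => hZm measurableSet_Iic
  have hAm : MeasurableSet A := (hmX x).inter (hmZ _)
  have hBm : MeasurableSet B := (hmX _).inter (hmZ x)
  have hSsub : {ω | θ * X ω + (1 - θ) * Z ω ≤ x} ⊆ A ∪ B := by
    intro ω hω
    simp only [mem_setOf_eq] at hω
    have h1 : X ω ≤ x / θ := by rw [le_div_iff₀ hθ0]; nlinarith [hZnn ω]
    have h2 : Z ω ≤ x / (1 - θ) := by rw [le_div_iff₀ h1θ]; nlinarith [hXnn ω]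
    rcases le_total (X ω) (Z ω) with h | h
    · exact Or.inl ⟨show X ω ≤ x by nlinarith [mul_le_mul_of_nonneg_left h h1θ.le], h2⟩
    · exact Or.inr ⟨h1, show Z ω ≤ x by nlinarith [mul_le_mul_of_nonneg_left h hθ0.le]⟩
  have hCsub : {ω | X ω ≤ x} ∩ {ω | Z ω ≤ x} ⊆ A ∩ B := by
    intro ω ⟨h1, h2⟩
    exact ⟨⟨h1, le_trans h2 hxθ'⟩, ⟨le_trans h1 hxθ, h2⟩⟩
  have hkey : μ {ω | θ * X ω + (1 - θ) * Z ω ≤ x} + μ ({ω | X ω ≤ x} ∩ {ω | Z ω ≤ x})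
      ≤ μ A + μ B := by
    calc μ {ω | θ * X ω + (1 - θ) * Z ω ≤ x} + μ ({ω | X ω ≤ x} ∩ {ω | Z ω ≤ x})
        ≤ μ (A ∪ B) + μ (A ∩ B) := add_le_add (measure_mono hSsub) (measure_mono hCsub)
      _ = μ A + μ B := measure_union_add_inter' hAm B
  -- independence products
  have hprod : ∀ s t : ℝ, μ ({ω | X ω ≤ s} ∩ {ω | Z ω ≤ t})
      = μ {ω | X ω ≤ s} * μ {ω | Z ω ≤ t} := fun s t =>
    hind.measure_inter_preimage_eq_mul (Iic s) (Iic t) measurableSet_Iic measurableSet_Iic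
  rw [hA, hB, hprod, hprod, hprod] at hkey
  -- move to reals
  set fx := (μ {ω | X ω ≤ x}).toReal with hfx
  set fθ := (μ {ω | X ω ≤ x / θ}).toReal
  set f1 := (μ {ω | X ω ≤ x / (1 - θ)}).toReal
  set gx := (μ {ω | Z ω ≤ x}).toReal
  set g1 := (μ {ω | Z ω ≤ x / (1 - θ)}).toReal
  set a := (μ {ω | θ * X ω + (1 - θ) * Z ω ≤ x}).toReal with ha
  have hfin : ∀ s : Set Ω, μ s ≠ ⊤ := fun s => measure_ne_top μ s
  have hkeyR : a + fx * gx ≤ fx * g1 + fθ * gx := by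
    have := ENNReal.toReal_mono (by finiteness) hkey
    rw [ENNReal.toReal_add (hfin _) (by finiteness), ENNReal.toReal_add (by finiteness) (by finiteness),
      ENNReal.toReal_mul, ENNReal.toReal_mul, ENNReal.toReal_mul] at this
    exact this
  have hgxfx : gx ≤ fx := ENNReal.toReal_mono (hfin _) (hG x)
  have hg1f1 : g1 ≤ f1 := ENNReal.toReal_mono (hfin _) (hG _)
  have hfxfθ : fx ≤ fθ := ENNReal.toReal_mono (hfin _)
    (measure_mono (fun ω (h : X ω ≤ x) => le_trans h hxθ))
  have hfx0 : 0 ≤ fx := ENNReal.toReal_nonneg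
  have hgx0 : 0 ≤ gx := ENNReal.toReal_nonneg
  have hafx : a ≤ fx := by nlinarith
  rw [← ENNReal.toReal_le_toReal (hfin _) (hfin _)]
  exact hafx


lemma main9 {Ω : Type*} [MeasurableSpace Ω] (μ : Measure Ω) [IsProbabilityMeasure μ]
    (n : ℕ) (X : Fin (n + 1) → Ω → ℝ) (hX : ∀ i, Measurable (X i))
    (hnn : ∀ i ω, 0 ≤ X i ω)
    (hindep : iIndepFun X μ)
    (hid : ∀ i, Measure.map (X i) μ = Measure.map (X 0) μ)
    (F : ℝ → ℝ) (hF : ∀ x, F x = (μ {ω | X 0 ω ≤ x}).toReal)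
    (hsub : ∀ x θ : ℝ, 0 ≤ x → θ ∈ Ioo (0 : ℝ) 1 →
      F (x / θ) + F (x / (1 - θ)) ≤ F x + 1)
    (s : Finset (Fin (n + 1))) :
    ∀ θ : Fin (n + 1) → ℝ, (∀ i, 0 ≤ θ i) → (∑ i ∈ s, θ i = 1) →
    ∀ x : ℝ, μ {ω | ∑ i ∈ s, θ i * X i ω ≤ x} ≤ μ {ω | X 0 ω ≤ x} := by
  classical
  have hid' : ∀ i t, μ {ω | X i ω ≤ t} = μ {ω | X 0 ω ≤ t} := by
    intro i t
    have h1 : μ {ω | X i ω ≤ t} = (Measure.map (X i) μ) (Iic t) := by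
      rw [Measure.map_apply (hX i) measurableSet_Iic]; rfl
    have h2 : μ {ω | X 0 ω ≤ t} = (Measure.map (X 0) μ) (Iic t) := by
      rw [Measure.map_apply (hX 0) measurableSet_Iic]; rfl
    rw [h1, h2, hid i]
  induction s using Finset.strongInductionOn with
  | _ s ih =>
    intro θ hθnn hθsum x
    rcases lt_or_ge x 0 with hx | hx
    · have : {ω | ∑ i ∈ s, θ i * X i ω ≤ x} = ∅ := by
        ext ω
        simp only [mem_setOf_eq, mem_empty_iff_false, iff_false, not_le]
        exact lt_of_lt_of_le hx
          (Finset.sum_nonneg fun i _ => mul_nonneg (hθnn i) (hnn i ω))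
      simp [this]
    have hs : s.Nonempty := by
      rcases Finset.eq_empty_or_nonempty s with h | h
      · simp [h] at hθsum
      · exact h
    by_cases hzero : ∃ j ∈ s, θ j = 0
    · obtain ⟨j, hj, hθj⟩ := hzero
      have hsum' : ∀ ω, ∑ i ∈ s.erase j, θ i * X i ω = ∑ i ∈ s, θ i * X i ω := by
        intro ω
        exact Finset.sum_erase _ (by simp [hθj])
      have hset : {ω | ∑ i ∈ s, θ i * X i ω ≤ x}
          = {ω | ∑ i ∈ s.erase j, θ i * X i ω ≤ x} := by
        ext ω; simp [hsum' ω]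
      rw [hset]
      exact ih (s.erase j) (Finset.erase_ssubset hj) θ hθnn
        (by rw [Finset.sum_erase _ hθj]; exact hθsum) x
    push_neg at hzero
    have hpos : ∀ i ∈ s, 0 < θ i := fun i hi => (hθnn i).lt_of_ne' (hzero i hi)
    obtain ⟨j, hj⟩ := hs
    by_cases herase : s.erase j = ∅
    · -- s = {j}, θ j = 1
      have hsj : s = {j} := by
        rcases (Finset.erase_eq_empty_iff s j).mp herase with h | h
        · exact absurd h (Finset.nonempty_iff_ne_empty.mp ⟨j, hj⟩)
        · exact h
      subst hsj
      have hθj1 : θ j = 1 := by simpa using hθsum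
      have hset : {ω | ∑ i ∈ ({j} : Finset (Fin (n+1))), θ i * X i ω ≤ x}
          = {ω | X j ω ≤ x} := by
        ext ω; simp [hθj1]
      rw [hset, hid' j x]
    · -- main case
      have hte : (s.erase j).Nonempty := Finset.nonempty_iff_ne_empty.mpr herase
      set c : ℝ := ∑ i ∈ s.erase j, θ i with hc
      have hcθ : θ j + c = 1 := by rw [hc, Finset.add_sum_erase _ _ hj]; exact hθsum
      have hcpos : 0 < c := by
        obtain ⟨k, hk⟩ := hte
        exact Finset.sum_pos' (fun i hi => hθnn i)
          ⟨k, hk, hpos k (Finset.mem_of_mem_erase hk)⟩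
      have hθjpos : 0 < θ j := hpos j hj
      have hθjlt : θ j < 1 := by linarith
      set Z : Ω → ℝ := fun ω => ∑ i ∈ s.erase j, (θ i / c) * X i ω with hZ
      have hZm : Measurable Z :=
        Finset.measurable_sum _ fun i _ => (hX i).const_mul _
      have hZnn : ∀ ω, 0 ≤ Z ω := fun ω =>
        Finset.sum_nonneg fun i _ =>
          mul_nonneg (div_nonneg (hθnn i) hcpos.le) (hnn i ω)
      -- independence
      have hind : IndepFun (X j) Z μ := by
        set φ : Fin (n+1) → ℝ → ℝ := fun i y => if i = j then y else (θ i / c) * y with hφ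
        have hφm : ∀ i, Measurable (φ i) := by
          intro i
          by_cases h : i = j
          · simpa [hφ, h] using measurable_id'
          · simpa [hφ, h] using measurable_id.const_mul (θ i / c)
        have hcomp : iIndepFun (fun i => φ i ∘ X i) μ :=
          hindep.comp φ hφm
        have h1 : IndepFun (∑ i ∈ s.erase j, φ i ∘ X i) (φ j ∘ X j) μ :=
          hcomp.indepFun_finsetSum_of_notMem (fun i => (hφm i).comp (hX i))
            (Finset.notMem_erase j s)
        have e1 : (∑ i ∈ s.erase j, φ i ∘ X i) = Z := by
          ext ω
          rw [Finset.sum_apply]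
          exact Finset.sum_congr rfl fun i hi => by
            simp [hφ, Finset.ne_of_mem_erase hi]
        have e2 : (φ j ∘ X j) = X j := by ext ω; simp [hφ]
        rw [e1, e2] at h1
        exact h1.symm
      -- dominance of Z
      have hG : ∀ t, μ {ω | Z ω ≤ t} ≤ μ {ω | X j ω ≤ t} := by
        intro t
        rw [hid' j t]
        refine ih (s.erase j) (Finset.erase_ssubset hj) (fun i => θ i / c)
          (fun i => div_nonneg (hθnn i) hcpos.le) ?_ t
        rw [← Finset.sum_div, ← hc, div_self hcpos.ne']
      -- subadditivity at x for X j
      have hsub' : (μ {ω | X j ω ≤ x / θ j}).toReal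
          + (μ {ω | X j ω ≤ x / (1 - θ j)}).toReal
          ≤ (μ {ω | X j ω ≤ x}).toReal + 1 := by
        have := hsub x (θ j) hx ⟨hθjpos, hθjlt⟩
        rw [hF, hF, hF] at this
        rwa [hid' j, hid' j, hid' j]
      -- rewrite the sum
      have hset : {ω | ∑ i ∈ s, θ i * X i ω ≤ x}
          = {ω | θ j * X j ω + (1 - θ j) * Z ω ≤ x} := by
        ext ω
        have : ∑ i ∈ s, θ i * X i ω = θ j * X j ω + (1 - θ j) * Z ω := by
          rw [← Finset.add_sum_erase _ _ hj]
          congr 1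
          rw [hZ, Finset.mul_sum, show (1:ℝ) - θ j = c by linarith]
          exact Finset.sum_congr rfl fun i hi => by
            field_simp
        simp [this]
      rw [hset, ← hid' j x]
      exact key9 μ (X j) Z (hX j) hZm (fun ω => hnn j ω) hZnn hind (θ j) x
        hθjpos hθjlt hx hG hsub'


/-- If `X₀, ..., Xₙ` are i.i.d. nonnegative random variables whose common
distribution function `F` satisfies the InvSub inequality
`F (x/θ) + F (x/(1-θ)) ≤ F x + 1`, then for any nonnegative weights summing to one,
`X₀ ≤_st ∑ θᵢ Xᵢ`. -/
theorem stmt9 {Ω : Type*} [MeasurableSpace Ω] (μ : Measure Ω) [IsProbabilityMeasure μ]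
    (n : ℕ) (X : Fin (n + 1) → Ω → ℝ) (hX : ∀ i, Measurable (X i))
    (hnn : ∀ i ω, 0 ≤ X i ω)
    (hindep : iIndepFun X μ)
    (hid : ∀ i, Measure.map (X i) μ = Measure.map (X 0) μ)
    (F : ℝ → ℝ) (hF : ∀ x, F x = (μ {ω | X 0 ω ≤ x}).toReal)
    (hsub : ∀ x θ : ℝ, 0 ≤ x → θ ∈ Ioo (0 : ℝ) 1 →
      F (x / θ) + F (x / (1 - θ)) ≤ F x + 1)
    (θ : Fin (n + 1) → ℝ) (hθnn : ∀ i, 0 ≤ θ i) (hθsum : ∑ i, θ i = 1) :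
    ∀ x : ℝ, μ {ω | x < X 0 ω} ≤ μ {ω | x < ∑ i, θ i * X i ω} := by
  intro x
  have h := main9 μ n X hX hnn hindep hid F hF hsub Finset.univ θ hθnn hθsum x
  have hA : MeasurableSet {ω | X 0 ω ≤ x} := hX 0 measurableSet_Iic
  have hB : MeasurableSet {ω | ∑ i, θ i * X i ω ≤ x} :=
    (Finset.measurable_sum Finset.univ fun i _ => (hX i).const_mul (θ i)) measurableSet_Iic
  have e1 : {ω | x < X 0 ω} = {ω | X 0 ω ≤ x}ᶜ := by ext ω; simp
  have e2 : {ω | x < ∑ i, θ i * X i ω} = {ω | ∑ i, θ i * X i ω ≤ x}ᶜ := by ext ω; simp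
  rw [e1, e2, measure_compl hA (measure_ne_top μ _), measure_compl hB (measure_ne_top μ _)]
  exact tsub_le_tsub_left h _
end

section
/- Let X₁, X₂ be i.i.d. copies of a random variable X with P(X₁ ≠ X₂) > 0, let θ ∈ (0,1), and suppose X ≤_st θX₁ + (1-θ)X₂. Then E[X] is infinite (assuming X is nonnegative). -/
/-!
Since `X₁` and `X₂` have the same law, `θ X₁ + (1 - θ) X₂` has the same mean as `X₁`. If that mean
were finite, stochastic dominance with equal means would force the two survival functions to agree
almost everywhere, hence (layer cake) `E √(θ X₁ + (1 - θ) X₂) = E √X₁`. But `E √X₁` is also the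
mean of `θ √X₁ + (1 - θ) √X₂`, which lies below `√(θ X₁ + (1 - θ) X₂)`, strictly where `X₁ ≠ X₂`,
by strict concavity of the square root; so `X₁ = X₂` almost surely.
-/

open MeasureTheory ProbabilityTheory Set Filter
open scoped ENNReal

lemma mul_sqrt_add_mul_sqrt_le {x y a b : ℝ} (hx : 0 ≤ x) (hy : 0 ≤ y) (ha : 0 ≤ a) (hb : 0 ≤ b)
    (hab : a + b = 1) : a * √x + b * √y ≤ √(a * x + b * y) :=
  Real.strictConcaveOn_sqrt.concaveOn.2 hx hy ha hb hab

lemma mul_sqrt_add_mul_sqrt_lt {x y a b : ℝ} (hx : 0 ≤ x) (hy : 0 ≤ y) (hxy : x ≠ y) (ha : 0 < a)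
    (hb : 0 < b) (hab : a + b = 1) : a * √x + b * √y < √(a * x + b * y) :=
  Real.strictConcaveOn_sqrt.2 hx hy hxy ha hb hab

lemma intervalIntegral_rpow_neg_half_div_two (x : ℝ) :
    ∫ t in (0 : ℝ)..x, t ^ (-(1 / 2) : ℝ) / 2 = √x := by
  rw [intervalIntegral.integral_div, integral_rpow (Or.inl (by norm_num)), Real.sqrt_eq_rpow,
    Real.zero_rpow (by norm_num)]
  norm_num
  ring

section

variable {Ω : Type*} [MeasurableSpace Ω] {μ : Measure Ω}

lemma lintegral_ofReal_sqrt_eq_lintegral_meas_lt_mul {f : Ω → ℝ} (hf : 0 ≤ᵐ[μ] f)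
    (hfm : AEMeasurable f μ) :
    ∫⁻ ω, ENNReal.ofReal √(f ω) ∂μ =
      ∫⁻ t in Ioi 0, μ {ω | t < f ω} * ENNReal.ofReal (t ^ (-(1 / 2) : ℝ) / 2) := by
  rw [← lintegral_comp_eq_lintegral_meas_lt_mul μ hf hfm]
  · simp only [intervalIntegral_rpow_neg_half_div_two]
  · exact fun t _ => (intervalIntegral.intervalIntegrable_rpow' (by norm_num)).div_const 2
  · filter_upwards [ae_restrict_mem measurableSet_Ioi] with t ht
    exact div_nonneg (Real.rpow_nonneg (le_of_lt ht) _) zero_le_two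

lemma lintegral_ofReal_sqrt_ne_top [IsFiniteMeasure μ] {f : Ω → ℝ}
    (hf : ∫⁻ ω, ENNReal.ofReal (f ω) ∂μ ≠ ∞) : ∫⁻ ω, ENNReal.ofReal √(f ω) ∂μ ≠ ∞ := by
  have hle : ∀ x : ℝ, ENNReal.ofReal √x ≤ 1 + ENNReal.ofReal x := by
    intro x
    rcases le_total 0 x with hx | hx
    · calc ENNReal.ofReal √x ≤ ENNReal.ofReal (1 + x) :=
            ENNReal.ofReal_le_ofReal (by nlinarith [Real.sq_sqrt hx, Real.sqrt_nonneg x])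
        _ ≤ 1 + ENNReal.ofReal x := by simpa using ENNReal.ofReal_add_le (p := 1) (q := x)
    · simp [Real.sqrt_eq_zero'.2 hx]
  refine ne_top_of_le_ne_top ?_ (lintegral_mono fun ω => hle (f ω))
  rw [lintegral_add_left measurable_const, lintegral_one]
  exact ENNReal.add_ne_top.2 ⟨measure_ne_top μ univ, hf⟩

lemma measure_lt_eq_zero_of_ae_le_of_lintegral_le {f g : Ω → ℝ≥0∞} (hfg : f ≤ᵐ[μ] g)
    (hf : ∫⁻ ω, f ω ∂μ ≠ ∞) (hg : AEMeasurable g μ) (hgf : ∫⁻ ω, g ω ∂μ ≤ ∫⁻ ω, f ω ∂μ) :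
    μ {ω | f ω < g ω} = 0 :=
  measure_mono_null (fun _ hω => ne_of_lt hω)
    (ae_iff.1 (ae_eq_of_ae_le_of_lintegral_le hfg hf hg hgf))

lemma meas_lt_ae_eq_of_meas_lt_le_of_lintegral_le {f g : Ω → ℝ} (hf : 0 ≤ᵐ[μ] f)
    (hfm : AEMeasurable f μ) (hg : 0 ≤ᵐ[μ] g) (hgm : AEMeasurable g μ)
    (hle : ∀ t, μ {ω | t < f ω} ≤ μ {ω | t < g ω})
    (hgf : ∫⁻ ω, ENNReal.ofReal (g ω) ∂μ ≤ ∫⁻ ω, ENNReal.ofReal (f ω) ∂μ)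
    (hfin : ∫⁻ ω, ENNReal.ofReal (f ω) ∂μ ≠ ∞) :
    (fun t => μ {ω | t < f ω}) =ᵐ[volume.restrict (Ioi 0)] fun t => μ {ω | t < g ω} := by
  rw [lintegral_eq_lintegral_meas_lt μ hf hfm] at hgf hfin
  rw [lintegral_eq_lintegral_meas_lt μ hg hgm] at hgf
  have hanti : Antitone fun t => μ {ω | t < g ω} :=
    fun _ _ hst => measure_mono fun _ hω => lt_of_le_of_lt hst hω
  exact ae_eq_of_ae_le_of_lintegral_le (Eventually.of_forall hle) hfin
    hanti.measurable.aemeasurable hgf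

lemma ProbabilityTheory.IdentDistrib.lintegral_ofReal_mul_add_mul {f g : Ω → ℝ}
    (hfg : IdentDistrib f g μ μ)
    (hf : 0 ≤ᵐ[μ] f) (hg : 0 ≤ᵐ[μ] g) {a b : ℝ} (ha : 0 ≤ a) (hb : 0 ≤ b) (hab : a + b = 1) :
    ∫⁻ ω, ENNReal.ofReal (a * f ω + b * g ω) ∂μ = ∫⁻ ω, ENNReal.ofReal (f ω) ∂μ := by
  have hsplit : (fun ω => ENNReal.ofReal (a * f ω + b * g ω)) =ᵐ[μ]
      fun ω => ENNReal.ofReal a * ENNReal.ofReal (f ω) + ENNReal.ofReal b * ENNReal.ofReal (g ω) := by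
    filter_upwards [hf, hg] with ω hfω hgω
    rw [ENNReal.ofReal_add (mul_nonneg ha hfω) (mul_nonneg hb hgω), ENNReal.ofReal_mul ha,
      ENNReal.ofReal_mul hb]
  have hfg' : ∫⁻ ω, ENNReal.ofReal (g ω) ∂μ = ∫⁻ ω, ENNReal.ofReal (f ω) ∂μ :=
    (hfg.comp ENNReal.measurable_ofReal).lintegral_eq.symm
  rw [lintegral_congr_ae hsplit,
    lintegral_add_left' (hfg.aemeasurable_fst.ennreal_ofReal.const_mul _),
    lintegral_const_mul' _ _ ENNReal.ofReal_ne_top, lintegral_const_mul' _ _ ENNReal.ofReal_ne_top,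
    hfg', ← add_mul, ← ENNReal.ofReal_add ha hb, hab, ENNReal.ofReal_one, one_mul]

end

theorem stmt10_general {Ω : Type*} [MeasurableSpace Ω] (μ : Measure Ω) [IsProbabilityMeasure μ]
    (X₁ X₂ : Ω → ℝ) (hX₁ : Measurable X₁) (hX₂ : Measurable X₂)
    (hnn₁ : ∀ ω, 0 ≤ X₁ ω) (hnn₂ : ∀ ω, 0 ≤ X₂ ω)
    (hid : Measure.map X₁ μ = Measure.map X₂ μ)
    (hne : 0 < μ {ω | X₁ ω ≠ X₂ ω})
    (θ : ℝ) (hθ : θ ∈ Ioo (0 : ℝ) 1)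
    (hdom : ∀ x : ℝ, μ {ω | x < X₁ ω} ≤ μ {ω | x < θ * X₁ ω + (1 - θ) * X₂ ω}) :
    ∫⁻ ω, ENNReal.ofReal (X₁ ω) ∂μ = ⊤ := by
  obtain ⟨hθ₀, hθ₁⟩ := hθ
  have ha : 0 ≤ θ := hθ₀.le
  have hb : 0 ≤ 1 - θ := sub_nonneg.2 hθ₁.le
  have hab : θ + (1 - θ) = 1 := add_sub_cancel θ 1
  by_contra hfin
  have hident : IdentDistrib X₁ X₂ μ μ := ⟨hX₁.aemeasurable, hX₂.aemeasurable, hid⟩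
  have hZ : 0 ≤ᵐ[μ] fun ω => θ * X₁ ω + (1 - θ) * X₂ ω :=
    ae_of_all _ fun ω => add_nonneg (mul_nonneg ha (hnn₁ ω)) (mul_nonneg hb (hnn₂ ω))
  have hZm : AEMeasurable (fun ω => θ * X₁ ω + (1 - θ) * X₂ ω) μ := by fun_prop
  have hmean := hident.lintegral_ofReal_mul_add_mul (ae_of_all _ hnn₁) (ae_of_all _ hnn₂) ha hb hab
  have hsurv := meas_lt_ae_eq_of_meas_lt_le_of_lintegral_le (ae_of_all _ hnn₁) hX₁.aemeasurable
    hZ hZm hdom hmean.le hfin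
  have hsqrt : ∫⁻ ω, ENNReal.ofReal √(θ * X₁ ω + (1 - θ) * X₂ ω) ∂μ =
      ∫⁻ ω, ENNReal.ofReal √(X₁ ω) ∂μ := by
    rw [lintegral_ofReal_sqrt_eq_lintegral_meas_lt_mul hZ hZm,
      lintegral_ofReal_sqrt_eq_lintegral_meas_lt_mul (ae_of_all _ hnn₁) hX₁.aemeasurable]
    exact lintegral_congr_ae (hsurv.symm.mul EventuallyEq.rfl)
  have hmean_sqrt : ∫⁻ ω, ENNReal.ofReal (θ * √(X₁ ω) + (1 - θ) * √(X₂ ω)) ∂μ =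
      ∫⁻ ω, ENNReal.ofReal √(X₁ ω) ∂μ :=
    (hident.comp Real.continuous_sqrt.measurable).lintegral_ofReal_mul_add_mul
      (ae_of_all _ fun ω => Real.sqrt_nonneg (X₁ ω)) (ae_of_all _ fun ω => Real.sqrt_nonneg (X₂ ω))
      ha hb hab
  have hnull := measure_lt_eq_zero_of_ae_le_of_lintegral_le
    (ae_of_all _ fun ω => ENNReal.ofReal_le_ofReal <|
      mul_sqrt_add_mul_sqrt_le (hnn₁ ω) (hnn₂ ω) ha hb hab)
    (hmean_sqrt ▸ lintegral_ofReal_sqrt_ne_top hfin) hZm.sqrt.ennreal_ofReal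
    (by rw [hsqrt, hmean_sqrt])
  refine hne.ne' (measure_mono_null (fun ω hω => ?_) hnull)
  refine (ENNReal.ofReal_lt_ofReal_iff_of_nonneg ?_).2 <|
    mul_sqrt_add_mul_sqrt_lt (hnn₁ ω) (hnn₂ ω) hω hθ₀ (sub_pos.2 hθ₁) hab
  exact add_nonneg (mul_nonneg ha (Real.sqrt_nonneg _)) (mul_nonneg hb (Real.sqrt_nonneg _))

/-- If `X₁, X₂` are i.i.d. nonnegative with `P(X₁ ≠ X₂) > 0`,
`θ ∈ (0,1)`, and `X₁ ≤_st θ X₁ + (1-θ) X₂`, then `E[X₁] = ∞`. -/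
theorem stmt10 {Ω : Type*} [MeasurableSpace Ω] (μ : Measure Ω) [IsProbabilityMeasure μ]
    (X₁ X₂ : Ω → ℝ) (hX₁ : Measurable X₁) (hX₂ : Measurable X₂)
    (hnn₁ : ∀ ω, 0 ≤ X₁ ω) (hnn₂ : ∀ ω, 0 ≤ X₂ ω)
    (hindep : IndepFun X₁ X₂ μ)
    (hid : Measure.map X₁ μ = Measure.map X₂ μ)
    (hne : 0 < μ {ω | X₁ ω ≠ X₂ ω})
    (θ : ℝ) (hθ : θ ∈ Ioo (0 : ℝ) 1)
    (hdom : ∀ x : ℝ, μ {ω | x < X₁ ω} ≤ μ {ω | x < θ * X₁ ω + (1 - θ) * X₂ ω}) :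
    ∫⁻ ω, ENNReal.ofReal (X₁ ω) ∂μ = ⊤ :=
  stmt10_general μ X₁ X₂ hX₁ hX₂ hnn₁ hnn₂ hid hne θ hθ hdom
end

section
/- If a nonnegative random variable X is InvSub, i.e. x ↦ 1 - F_X(1/x) is subadditive on (0,∞), and X is not almost surely constant, then E[X] = ∞. -/
open MeasureTheory Set
open scoped ENNReal

/-!
The tail `g s = P(X > 1/s)` is nonnegative, nondecreasing and subadditive on `(0, ∞)`, so
`g y ≤ g (⌈y/s⌉ s) ≤ ⌈y/s⌉ g s` gives the linear lower bound `g s ≥ g y s / (2y)` for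
`s ≤ y`.
Since `X > 0` a.s., some `g y` is positive, hence `P(X > t) ≥ c / t` for large `t`, and the
layer cake formula `E[X] = ∫₀^∞ P(X > t) dt` diverges like `∫ dt / t`.
-/

section Subadditive

variable {g : ℝ → ℝ} (hsub : ∀ x y, 0 < x → 0 < y → g (x + y) ≤ g x + g y)
include hsub

lemma apply_natCast_mul_le_of_subadditive {s : ℝ} (hs : 0 < s) {n : ℕ} (hn : 0 < n) :
    g (n * s) ≤ n * g s := by
  induction n, hn using Nat.le_induction with
  | base => simp
  | succ n hn ih =>
    have hns : 0 < (n : ℝ) * s := by positivity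
    calc g ((n + 1 : ℕ) * s) = g (n * s + s) := by push_cast; rw [add_one_mul]
      _ ≤ g (n * s) + g s := hsub _ _ hns hs
      _ ≤ (n + 1 : ℕ) * g s := by push_cast; linarith

lemma div_mul_le_apply_of_subadditive (hmono : MonotoneOn g (Ioi 0)) {s y : ℝ} (hs : 0 < s)
    (hsy : s ≤ y) (hgs : 0 ≤ g s) : g y / (2 * y) * s ≤ g s := by
  have hy : 0 < y := hs.trans_le hsy
  set k := ⌈y / s⌉₊
  have hk : 0 < k := Nat.ceil_pos.2 (by positivity)
  have hyk : y ≤ k * s := (div_le_iff₀ hs).1 (Nat.le_ceil _)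
  have hks : k * s ≤ 2 * y := by
    have : (k : ℝ) < y / s + 1 := Nat.ceil_lt_add_one (by positivity)
    rw [← sub_lt_iff_lt_add, lt_div_iff₀ hs, sub_one_mul] at this
    linarith
  have hgy : g y ≤ k * g s :=
    (hmono hy (mem_Ioi.2 (by positivity)) hyk).trans
      (apply_natCast_mul_le_of_subadditive hsub hs hk)
  rw [div_mul_eq_mul_div, div_le_iff₀ (by positivity), mul_comm (g s)]
  calc g y * s ≤ k * g s * s := mul_le_mul_of_nonneg_right hgy hs.le
    _ = k * s * g s := by ring
    _ ≤ 2 * y * g s := mul_le_mul_of_nonneg_right hks hgs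

end Subadditive

lemma exists_lt_measure_Ioi_ne_zero {μ : Measure ℝ} {a : ℝ} (h : μ (Ioi a) ≠ 0) :
    ∃ b, a < b ∧ μ (Ioi b) ≠ 0 := by
  by_contra! hb
  refine h (measure_mono_null (fun x hx => ?_)
    (measure_iUnion_null fun n : ℕ =>
      hb (a + 1 / (n + 1)) (lt_add_of_pos_right a Nat.one_div_pos_of_nat)))
  obtain ⟨n, hn⟩ := exists_nat_one_div_lt (sub_pos.2 (mem_Ioi.1 hx))
  exact mem_iUnion.2 ⟨n, by rw [mem_Ioi]; linarith⟩

lemma setLIntegral_ofReal_inv_Ioi_eq_top {a : ℝ} (ha : 0 ≤ a) :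
    ∫⁻ t in Ioi a, ENNReal.ofReal t⁻¹ = ∞ := by
  by_contra h
  have hnn : 0 ≤ᵐ[volume.restrict (Ioi a)] fun t : ℝ => t⁻¹ :=
    ae_restrict_of_forall_mem measurableSet_Ioi fun t ht => inv_nonneg.2 (ha.trans (le_of_lt ht))
  exact not_integrableOn_Ioi_inv
    ⟨measurable_inv.aestronglyMeasurable,
      (hasFiniteIntegral_iff_ofReal hnn).2 (lt_top_iff_ne_top.2 h)⟩

lemma lintegral_ofReal_eq_top_of_le_meas_lt {α : Type*} [MeasurableSpace α] (μ : Measure α)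
    {f : α → ℝ} (hf : 0 ≤ᵐ[μ] f) (hfm : AEMeasurable f μ) {c T : ℝ} (hc : 0 < c)
    (hT : 0 ≤ T)
    (htail : ∀ t, T < t → ENNReal.ofReal (c / t) ≤ μ {a | t < f a}) :
    ∫⁻ a, ENNReal.ofReal (f a) ∂μ = ∞ := by
  rw [lintegral_eq_lintegral_meas_lt μ hf hfm]
  refine top_unique ?_
  calc ∞ = ENNReal.ofReal c * ∫⁻ t in Ioi T, ENNReal.ofReal t⁻¹ := by
        rw [setLIntegral_ofReal_inv_Ioi_eq_top hT, ENNReal.mul_top (by simpa using hc)]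
    _ = ∫⁻ t in Ioi T, ENNReal.ofReal (c / t) := by
        simp_rw [div_eq_mul_inv, ENNReal.ofReal_mul hc.le]
        rw [lintegral_const_mul' _ _ ENNReal.ofReal_ne_top]
    _ ≤ ∫⁻ t in Ioi T, μ {a | t < f a} := setLIntegral_mono' measurableSet_Ioi htail
    _ ≤ ∫⁻ t in Ioi 0, μ {a | t < f a} := lintegral_mono_set (Ioi_subset_Ioi hT)

theorem stmt11_general (μ : Measure ℝ) [IsProbabilityMeasure μ]
    (F : ℝ → ℝ) (hF : ∀ x, F x = (μ (Iic x)).toReal) (hF0 : F 0 = 0)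
    (hsub : ∀ x y : ℝ, 0 < x → 0 < y →
      1 - F (1 / (x + y)) ≤ (1 - F (1 / x)) + (1 - F (1 / y))) :
    ∫⁻ x, ENNReal.ofReal x ∂μ = ⊤ := by
  have hμ0 : μ (Iic 0) = 0 := by
    rwa [hF, ← measureReal_def, measureReal_eq_zero_iff] at hF0
  have htail : ∀ t, 1 - F t = μ.real (Ioi t) := fun t => by
    rw [hF, ← compl_Iic, probReal_compl_eq_one_sub measurableSet_Iic, measureReal_def]
  set g : ℝ → ℝ := fun s => μ.real (Ioi s⁻¹)
  have hg_sub : ∀ x y, 0 < x → 0 < y → g (x + y) ≤ g x + g y := fun x y hx hy => by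
    simpa only [htail, one_div] using hsub x y hx hy
  have hg_mono : MonotoneOn g (Ioi 0) := fun x hx y _ hxy =>
    measureReal_mono (Ioi_subset_Ioi (inv_anti₀ hx hxy))
  obtain ⟨ε, hε, hμε⟩ := exists_lt_measure_Ioi_ne_zero (μ := μ) (a := 0) (by
    rw [← compl_Iic, prob_compl_eq_one_sub measurableSet_Iic, hμ0]; simp)
  have hgε : 0 < g ε⁻¹ := by
    simpa [g, measureReal_def, ENNReal.toReal_pos_iff, pos_iff_ne_zero] using hμε
  have hnn : 0 ≤ᵐ[μ] fun x : ℝ => x :=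
    ae_iff.2 (measure_mono_null (fun x hx => mem_Iic.2 (not_le.1 hx).le) hμ0)
  refine lintegral_ofReal_eq_top_of_le_meas_lt μ hnn aemeasurable_id
    (c := g ε⁻¹ / (2 * ε⁻¹)) (by positivity) hε.le fun t ht => ?_
  have hbound := div_mul_le_apply_of_subadditive hg_sub hg_mono (inv_pos.2 (hε.trans ht))
    (inv_anti₀ hε ht.le) measureReal_nonneg
  change _ ≤ μ (Ioi t)
  rw [div_eq_mul_inv _ t]
  simpa only [g, inv_inv] using ENNReal.ofReal_le_of_le_toReal hbound

/-- If a nonnegative random variable (with distribution `μ` on `ℝ`,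
`F 0 = 0`) is InvSub, i.e. `x ↦ 1 - F (1/x)` is subadditive on `(0,∞)`, and is not
almost surely constant, then its mean is infinite. -/
theorem stmt11 (μ : Measure ℝ) [IsProbabilityMeasure μ]
    (F : ℝ → ℝ) (hF : ∀ x, F x = (μ (Iic x)).toReal) (hF0 : F 0 = 0)
    (hsub : ∀ x y : ℝ, 0 < x → 0 < y →
      1 - F (1 / (x + y)) ≤ (1 - F (1 / x)) + (1 - F (1 / y)))
    (hnc : ¬ ∃ c : ℝ, μ {c} = 1) :
    ∫⁻ x, ENNReal.ofReal x ∂μ = ⊤ :=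
  stmt11_general μ F hF hF0 hsub
end

section
/- If T is a standard Cauchy random variable with distribution function C(x) = (1/π)arctan(x) + 1/2, then |T| is InvSub: the function x ↦ 1 - F_{|T|}(1/x) = 1 - (2/π)arctan(1/x) is subadditive on (0,∞). -/
open MeasureTheory Set Real

/-
The distribution function of `|T|` is `C x - C (-x) = (2/π) arctan x`, and since
`arctan (1/x) = π/2 - arctan x`, the function `1 - F_{|T|} (1/x)` is again `(2/π) arctan x`.
Subadditivity of `arctan` on `[0, ∞)` follows from the addition formula:
`arctan (x + y) - arctan y = arctan (x / (1 + (x + y) y)) ≤ arctan x`.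
-/

theorem Real.arctan_add_le {x y : ℝ} (hx : 0 ≤ x) (hy : 0 ≤ y) :
    arctan (x + y) ≤ arctan x + arctan y := by
  have hxy : (x + y) * -y < 1 := by nlinarith
  have hshrink : (x + y + -y) / (1 - (x + y) * -y) ≤ x := by
    rw [div_le_iff₀ (by linarith)]
    nlinarith [mul_nonneg hx (mul_nonneg (add_nonneg hx hy) hy)]
  have := arctan_add hxy
  rw [arctan_neg] at this
  linarith [arctan_strictMono.monotone hshrink]

section DistributionFunction

variable {Ω : Type*} [MeasurableSpace Ω] (μ : Measure Ω) [IsFiniteMeasure μ] {T : Ω → ℝ}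

theorem toReal_measure_lt_eq_of_continuousWithinAt {F : ℝ → ℝ}
    (hF : ∀ x, (μ {ω | T ω ≤ x}).toReal = F x) {a : ℝ} (hcont : ContinuousWithinAt F (Iio a) a) :
    (μ {ω | T ω < a}).toReal = F a := by
  refine le_antisymm ?_ (le_of_tendsto hcont ?_)
  · rw [← hF]
    exact ENNReal.toReal_mono (measure_ne_top μ _) (measure_mono fun ω (h : T ω < a) => h.le)
  · filter_upwards [self_mem_nhdsWithin] with b hb
    rw [← hF]
    exact ENNReal.toReal_mono (measure_ne_top μ _)
      (measure_mono fun ω (h : T ω ≤ b) => h.trans_lt hb)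

theorem toReal_measure_abs_le (hT : Measurable T) {x : ℝ} (hx : 0 ≤ x) :
    (μ {ω | |T ω| ≤ x}).toReal = (μ {ω | T ω ≤ x}).toReal - (μ {ω | T ω < -x}).toReal := by
  have hsplit : {ω | |T ω| ≤ x} = {ω | T ω ≤ x} \ {ω | T ω < -x} := by
    ext ω
    simp only [mem_ofPred_eq, mem_sdiff, abs_le, not_lt, and_comm]
  have hsub : {ω | T ω < -x} ⊆ {ω | T ω ≤ x} := fun ω h => by
    simp only [mem_ofPred_eq] at *
    linarith
  rw [hsplit, measure_sdiff hsub (hT measurableSet_Iio).nullMeasurableSet (measure_ne_top μ _),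
    ENNReal.toReal_sub_of_le (measure_mono hsub) (measure_ne_top μ _)]

end DistributionFunction

/-- If `T` is a standard Cauchy random variable, with distribution
function `C x = (1/π) arctan x + 1/2`, then `|T|` is InvSub: the function
`x ↦ 1 - F_{|T|} (1/x) = 1 - (2/π) arctan (1/x)` is subadditive on `(0,∞)`. -/
theorem stmt17 {Ω : Type*} [MeasurableSpace Ω] (μ : Measure Ω) [IsProbabilityMeasure μ]
    (T : Ω → ℝ) (hT : Measurable T)
    (hC : ∀ x : ℝ, (μ {ω | T ω ≤ x}).toReal = (1 / Real.pi) * Real.arctan x + 1 / 2)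
    (G : ℝ → ℝ) (hG : ∀ x, G x = (μ {ω | |T ω| ≤ x}).toReal) :
    (∀ x : ℝ, 0 ≤ x → G x = (2 / Real.pi) * Real.arctan x) ∧
    (∀ x y : ℝ, 0 < x → 0 < y →
      1 - G (1 / (x + y)) ≤ (1 - G (1 / x)) + (1 - G (1 / y))) := by
  have hG_eq (x : ℝ) (hx : 0 ≤ x) : G x = (2 / π) * arctan x := by
    have hlt := toReal_measure_lt_eq_of_continuousWithinAt μ hC (a := -x)
      (by fun_prop : Continuous fun x => 1 / π * arctan x + 1 / 2).continuousWithinAt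
    rw [hG, toReal_measure_abs_le μ hT hx, hC, hlt, arctan_neg]
    ring
  have hG_inv (z : ℝ) (hz : 0 < z) : 1 - G (1 / z) = (2 / π) * arctan z := by
    rw [hG_eq _ (by positivity), one_div, arctan_inv_of_pos hz]
    field_simp
    ring
  refine ⟨hG_eq, fun x y hx hy => ?_⟩
  rw [hG_inv _ (by positivity), hG_inv x hx, hG_inv y hy, ← mul_add]
  gcongr
  exact arctan_add_le hx.le hy.le
end
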